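/- arXiv:2302.11847 — 3 statements merged into one kernel-verified Lean document; each statement's English description precedes it below -/
import Mathlib

section
/- Suppose H : 𝒫(ℝ^d) → [0,∞] is monotone and countably subadditive. Let (f_n) be a sequence of real-valued functions on ℝ^d and f : ℝ^d → ℝ with ∫|f| dH < ∞, such that ∫|f_n − f| dH ≤ 1/4^n for every n ∈ ℕ. Then f_n → f quasi-uniformly and there exists F : ℝ^d → [0,∞] with ∫F dH < ∞ and |f_n| ≤ F on ℝ^d for every n ∈ ℕ. -/
open MeasureTheory Filter Set Topology
open scoped ENNReal

/-- The Choquet integral `∫ f dH = ∫₀^∞ H({f > t}) dt` of `f : α → [0,∞]`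
with respect to a set function `H`. -/
noncomputable def choquet {α : Type*} (H : Set α → ℝ≥0∞) (f : α → ℝ≥0∞) : ℝ≥0∞ :=
  ∫⁻ t in Set.Ioi (0 : ℝ), H {x | ENNReal.ofReal t < f x}

/-- A set function is monotone if `E ⊆ F` implies `H E ≤ H F`. -/
def MonotoneSF {α : Type*} (H : Set α → ℝ≥0∞) : Prop :=
  ∀ ⦃E F : Set α⦄, E ⊆ F → H E ≤ H F

/-- Strong subadditivity: `H(E ∩ F) + H(E ∪ F) ≤ H(E) + H(F)`. -/
def StronglySubadditive {α : Type*} (H : Set α → ℝ≥0∞) : Prop :=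
  ∀ E F : Set α, H (E ∩ F) + H (E ∪ F) ≤ H E + H F

def FinitelySubadditive {α : Type*} (H : Set α → ℝ≥0∞) : Prop :=
  ∀ E F : Set α, H (E ∪ F) ≤ H E + H F

def CountablySubadditive {α : Type*} (H : Set α → ℝ≥0∞) : Prop :=
  ∀ E : ℕ → Set α, H (⋃ n, E n) ≤ ∑' n, H (E n)

/-- Quasi-uniform convergence of a sequence of real-valued functions:
for every `ε > 0` there is a set `E` with `H E ≤ ε` such that the sequence
converges uniformly on the complement of `E`. -/
def QUTendsto {α : Type*} (H : Set α → ℝ≥0∞) (f : ℕ → α → ℝ) (g : α → ℝ) : Prop :=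
  ∀ ε : ℝ, 0 < ε → ∃ E : Set α, H E ≤ ENNReal.ofReal ε ∧
    TendstoUniformlyOn f g Filter.atTop Eᶜ

/-- Quasi-uniform convergence of a sequence of `[0,∞]`-valued functions: for every
`ε > 0` there is a set `E` with `H E ≤ ε` such that the functions are finite on the
complement of `E` and converge uniformly to `g` there. -/
def QUTendstoENN {α : Type*} (H : Set α → ℝ≥0∞) (f : ℕ → α → ℝ≥0∞) (g : α → ℝ≥0∞) : Prop :=
  ∀ ε : ℝ, 0 < ε → ∃ E : Set α, H E ≤ ENNReal.ofReal ε ∧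
    (∀ n, ∀ x ∉ E, f n x ≠ ⊤) ∧ (∀ x ∉ E, g x ≠ ⊤) ∧
    TendstoUniformlyOn (fun n x => (f n x).toReal) (fun x => (g x).toReal) Filter.atTop Eᶜ

/-- A function `f : α → [-∞,∞]` is quasicontinuous with respect to `H` if for every
`ε > 0` there is an open set `ω` with `H ω ≤ ε` such that `f` is finite and continuous
on the complement of `ω`. -/
def QuasicontinuousE {α : Type*} [TopologicalSpace α] (H : Set α → ℝ≥0∞) (f : α → EReal) : Prop :=
  ∀ ε : ℝ, 0 < ε → ∃ ω : Set α, IsOpen ω ∧ H ω ≤ ENNReal.ofReal ε ∧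
    (∀ x ∉ ω, f x ≠ ⊤ ∧ f x ≠ ⊥) ∧ ContinuousOn f ωᶜ

/-- Quasicontinuity of a real-valued function. -/
def QuasicontinuousR {α : Type*} [TopologicalSpace α] (H : Set α → ℝ≥0∞) (f : α → ℝ) : Prop :=
  ∀ ε : ℝ, 0 < ε → ∃ ω : Set α, IsOpen ω ∧ H ω ≤ ENNReal.ofReal ε ∧ ContinuousOn f ωᶜ

/-- Quasicontinuity of a `[0,∞]`-valued function: finite and continuous off an open
set of small capacity. -/
def QuasicontinuousENN {α : Type*} [TopologicalSpace α] (H : Set α → ℝ≥0∞) (f : α → ℝ≥0∞) :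
    Prop :=
  ∀ ε : ℝ, 0 < ε → ∃ ω : Set α, IsOpen ω ∧ H ω ≤ ENNReal.ofReal ε ∧
    (∀ x ∉ ω, f x ≠ ⊤) ∧ ContinuousOn f ωᶜ

/-- Evanescence: for every open `U` with `H U < ∞` and every closed `F ⊆ U`,
`H(F \ B_r) → 0` as `r → ∞`. -/
def Evanescent {d : ℕ} (H : Set (EuclideanSpace ℝ (Fin d)) → ℝ≥0∞) : Prop :=
  ∀ U : Set (EuclideanSpace ℝ (Fin d)), IsOpen U → H U < ⊤ →
    ∀ F : Set (EuclideanSpace ℝ (Fin d)), IsClosed F → F ⊆ U →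
      Filter.Tendsto (fun r : ℝ => H (F \ Metric.ball 0 r)) Filter.atTop (nhds 0)

/-- Semifiniteness: every open set of infinite capacity contains subsets of
arbitrarily large finite capacity. -/
def SemifiniteSF {α : Type*} [TopologicalSpace α] (H : Set α → ℝ≥0∞) : Prop :=
  ∀ U : Set α, IsOpen U → H U = ⊤ → ∀ M : ℝ, 0 ≤ M →
    ∃ E ⊆ U, ENNReal.ofReal M ≤ H E ∧ H E < ⊤

/-- The regularization `H̃(A) = sup { H(D) : D ⊆ A, H(D) < ∞ }`. -/
noncomputable def tildeSF {α : Type*} (H : Set α → ℝ≥0∞) (A : Set α) : ℝ≥0∞ :=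
  ⨆ (D : Set α) (_ : D ⊆ A) (_ : H D < ⊤), H D


/-!
Markov's inequality for the Choquet integral turns `∫ |f n - g| dH ≤ 4⁻ⁿ` into
`H {|f n - g| > 2⁻ⁿ} ≤ 2⁻ⁿ`. By countable subadditivity the union of these sets over `n ≥ N`
has capacity at most `2¹⁻ᴺ`, and off it `|f n - g| ≤ 2⁻ⁿ` for all `n ≥ N`.

For the majorant: the Choquet integral of a general `H` is not subadditive on sums, but it is
countably subadditive on suprema, since `{sup u > t} = ⋃ {u n > t}`.
So `|f n| ≤ 2 (|g| ⊔ supₙ |f n - g|)` gives a majorant of integral `≤ 2 (∫ |g| dH + ∑ 4⁻ⁿ)`.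
-/

section Choquet

variable {α : Type*} {H : Set α → ℝ≥0∞}

theorem MonotoneSF.measurable_superlevel (hmono : MonotoneSF H) (m : α → ℝ≥0∞) :
    Measurable fun t : ℝ => H {x | ENNReal.ofReal t < m x} :=
  Antitone.measurable fun _ _ hst =>
    hmono fun _ hx => (ENNReal.ofReal_le_ofReal hst).trans_lt hx

theorem MonotoneSF.mul_superlevel_le_choquet (hmono : MonotoneSF H) (h : α → ℝ) {a : ℝ}
    (ha : 0 < a) :
    ENNReal.ofReal a * H {x | a < h x} ≤ choquet H fun x => ENNReal.ofReal (h x) := by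
  have hlayer :
      ∀ t ∈ Ioo 0 a, H {x | a < h x} ≤ H {x | ENNReal.ofReal t < ENNReal.ofReal (h x)} :=
    fun t ht => hmono fun x (hx : a < h x) =>
      (ENNReal.ofReal_lt_ofReal_iff (ha.trans hx)).2 (ht.2.trans hx)
  calc ENNReal.ofReal a * H {x | a < h x}
      = ∫⁻ _ in Ioo 0 a, H {x | a < h x} := by
        rw [setLIntegral_const, Real.volume_Ioo, sub_zero, mul_comm]
    _ ≤ ∫⁻ t in Ioo 0 a, H {x | ENNReal.ofReal t < ENNReal.ofReal (h x)} :=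
        setLIntegral_mono (hmono.measurable_superlevel _) hlayer
    _ ≤ choquet H fun x => ENNReal.ofReal (h x) := lintegral_mono_set Ioo_subset_Ioi_self

theorem MonotoneSF.superlevel_le_of_choquet_le_mul (hmono : MonotoneSF H) (h : α → ℝ) {a : ℝ}
    (ha : 0 < a) {b : ℝ≥0∞}
    (hb : (choquet H fun x => ENNReal.ofReal (h x)) ≤ ENNReal.ofReal a * b) :
    H {x | a < h x} ≤ b :=
  (ENNReal.mul_le_mul_iff_right (by simpa using ha) ENNReal.ofReal_ne_top).1
    ((hmono.mul_superlevel_le_choquet h ha).trans hb)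

theorem lintegral_Ioi_comp_div (φ : ℝ → ℝ≥0∞) {c : ℝ} (hc : 0 < c) :
    ∫⁻ t in Ioi 0, φ (t / c) = ENNReal.ofReal c * ∫⁻ t in Ioi 0, φ t := by
  have hc' : c⁻¹ ≠ 0 := inv_ne_zero hc.ne'
  have hpre : (· * c⁻¹) ⁻¹' Ioi (0 : ℝ) = Ioi 0 := by
    ext t; simp [hc]
  have hmap : (volume.restrict (Ioi 0)).map (· * c⁻¹) =
      ENNReal.ofReal c • volume.restrict (Ioi (0 : ℝ)) := by
    conv_lhs => rw [← hpre]
    rw [← Measure.restrict_map (measurable_mul_const _) measurableSet_Ioi,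
      Real.map_volume_mul_right hc', inv_inv, abs_of_pos hc, Measure.restrict_smul]
  simp only [div_eq_mul_inv]
  rw [← (measurableEmbedding_mulRight₀ hc').lintegral_map, hmap, lintegral_smul_measure,
    smul_eq_mul]

theorem choquet_ofReal_mul (H : Set α → ℝ≥0∞) (m : α → ℝ≥0∞) {c : ℝ} (hc : 0 < c) :
    choquet H (fun x => ENNReal.ofReal c * m x) = ENNReal.ofReal c * choquet H m := by
  have hlayer : ∀ t : ℝ, {x | ENNReal.ofReal t < ENNReal.ofReal c * m x} =
      {x | ENNReal.ofReal (t / c) < m x} := by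
    intro t
    ext x
    rw [mem_ofPred_eq, mem_ofPred_eq, ENNReal.ofReal_div_of_pos hc,
      ENNReal.div_lt_iff (.inl (by simpa using hc)) (.inl ENNReal.ofReal_ne_top), mul_comm]
  simp only [choquet, hlayer]
  exact lintegral_Ioi_comp_div (fun s => H {x | ENNReal.ofReal s < m x}) hc

theorem CountablySubadditive.choquet_iSup_le (hcount : CountablySubadditive H)
    (hmono : MonotoneSF H) (u : ℕ → α → ℝ≥0∞) :
    choquet H (fun x => ⨆ n, u n x) ≤ ∑' n, choquet H (u n) := by
  have hlayer : ∀ t : ℝ, {x | ENNReal.ofReal t < ⨆ n, u n x} =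
      ⋃ n, {x | ENNReal.ofReal t < u n x} := by
    intro t; ext x; simp [lt_iSup_iff]
  calc choquet H (fun x => ⨆ n, u n x)
      ≤ ∫⁻ t in Ioi 0, ∑' n, H {x | ENNReal.ofReal t < u n x} :=
        lintegral_mono fun t => (hlayer t).symm ▸ hcount _
    _ = ∑' n, choquet H (u n) :=
        lintegral_tsum fun n => (hmono.measurable_superlevel (u n)).aemeasurable

theorem CountablySubadditive.choquet_sup_iSup_le (hcount : CountablySubadditive H)
    (hmono : MonotoneSF H) (a : α → ℝ≥0∞) (b : ℕ → α → ℝ≥0∞) :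
    choquet H (fun x => a x ⊔ ⨆ n, b n x) ≤ choquet H a + ∑' n, choquet H (b n) := by
  have hsup : (fun x => a x ⊔ ⨆ n, b n x) = fun x => ⨆ n, (Nat.casesOn n a b : α → ℝ≥0∞) x :=
    funext fun x => sup_iSup_nat_succ fun n => (Nat.casesOn n a b : α → ℝ≥0∞) x
  rw [hsup]
  exact (hcount.choquet_iSup_le hmono _).trans_eq (tsum_eq_zero_add' ENNReal.summable)

theorem CountablySubadditive.qUTendsto_of_superlevel_le (hcount : CountablySubadditive H)
    {f : ℕ → α → ℝ} {g : α → ℝ} {δ : ℕ → ℝ} (hδ : Tendsto δ atTop (𝓝 0))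
    {ε : ℕ → ℝ≥0∞} (hε : ∑' n, ε n ≠ ⊤) (hlevel : ∀ n, H {x | δ n < |f n x - g x|} ≤ ε n) :
    QUTendsto H f g := by
  intro η hη
  obtain ⟨N, hN⟩ := ((ENNReal.tendsto_sum_nat_add ε hε).eventually
    (gt_mem_nhds (ENNReal.ofReal_pos.2 hη))).exists
  refine ⟨⋃ k, {x | δ (k + N) < |f (k + N) x - g x|}, ?_, ?_⟩
  · exact (hcount _).trans ((ENNReal.tsum_le_tsum fun k => hlevel (k + N)).trans hN.le)
  · rw [Metric.tendstoUniformlyOn_iff]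
    intro ρ hρ
    filter_upwards [eventually_ge_atTop N, hδ.eventually (gt_mem_nhds hρ)] with n hn hδn x hx
    have hclose : |f n x - g x| ≤ δ n := by
      obtain ⟨k, rfl⟩ := Nat.exists_eq_add_of_le' hn
      simpa using fun h => hx (mem_iUnion.2 ⟨k, h⟩)
    rw [dist_comm, Real.dist_eq]
    linarith

end Choquet

theorem ofReal_abs_le_two_mul_sup_iSup_abs_sub (a : ℕ → ℝ) (b : ℝ) (n : ℕ) :
    ENNReal.ofReal |a n| ≤
      ENNReal.ofReal 2 * (ENNReal.ofReal |b| ⊔ ⨆ m, ENNReal.ofReal |a m - b|) :=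
  calc ENNReal.ofReal |a n|
      ≤ ENNReal.ofReal |b| + ENNReal.ofReal |a n - b| := by
        rw [← ENNReal.ofReal_add (abs_nonneg _) (abs_nonneg _)]
        exact ENNReal.ofReal_le_ofReal (by simpa using abs_add_le b (a n - b))
    _ ≤ 2 * (ENNReal.ofReal |b| ⊔ ⨆ m, ENNReal.ofReal |a m - b|) := by
        rw [two_mul]
        exact add_le_add le_sup_left
          ((le_iSup (fun m => ENNReal.ofReal |a m - b|) n).trans le_sup_right)
    _ = ENNReal.ofReal 2 * (ENNReal.ofReal |b| ⊔ ⨆ m, ENNReal.ofReal |a m - b|) := by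
        rw [ENNReal.ofReal_ofNat]

/-- Partial converse of the dominated convergence theorem. -/
theorem choquet_quasiUniform_of_rapidConvergence {d : ℕ}
    (H : Set (EuclideanSpace ℝ (Fin d)) → ℝ≥0∞)
    (hmono : MonotoneSF H) (hcount : CountablySubadditive H)
    (f : ℕ → EuclideanSpace ℝ (Fin d) → ℝ) (g : EuclideanSpace ℝ (Fin d) → ℝ)
    (hg : choquet H (fun x => ENNReal.ofReal |g x|) < ⊤)
    (hrate : ∀ n : ℕ,
      choquet H (fun x => ENNReal.ofReal |f n x - g x|) ≤ (1 / 4 : ℝ≥0∞) ^ n) :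
    QUTendsto H f g ∧
      ∃ F : EuclideanSpace ℝ (Fin d) → ℝ≥0∞, choquet H F < ⊤ ∧
        ∀ n x, ENNReal.ofReal |f n x| ≤ F x := by
  have hquarter : ∀ n : ℕ, (1 / 4 : ℝ≥0∞) ^ n = ENNReal.ofReal ((2⁻¹ : ℝ) ^ n) * 2⁻¹ ^ n := by
    intro n
    rw [ENNReal.ofReal_pow (by norm_num), ENNReal.ofReal_inv_of_pos two_pos, ENNReal.ofReal_ofNat,
      ← mul_pow, ← ENNReal.mul_inv (.inl two_ne_zero) (.inl ENNReal.ofNat_ne_top), one_div]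
    norm_num
  have hlevel : ∀ n, H {x | (2⁻¹ : ℝ) ^ n < |f n x - g x|} ≤ 2⁻¹ ^ n := fun n =>
    hmono.superlevel_le_of_choquet_le_mul _ (by positivity) ((hrate n).trans_eq (hquarter n))
  let M x := ENNReal.ofReal |g x| ⊔ ⨆ n, ENNReal.ofReal |f n x - g x|
  refine ⟨hcount.qUTendsto_of_superlevel_le
    (tendsto_pow_atTop_nhds_zero_of_lt_one (by norm_num) (by norm_num))
    (tsum_geometric_lt_top.2 ENNReal.one_half_lt_one).ne hlevel,
    fun x => ENNReal.ofReal 2 * M x, ?_, fun n x => ?_⟩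
  · rw [choquet_ofReal_mul H M two_pos]
    refine ENNReal.mul_lt_top ENNReal.ofReal_lt_top
      ((hcount.choquet_sup_iSup_le hmono _ _).trans_lt ?_)
    exact ENNReal.add_lt_top.2 ⟨hg, (ENNReal.tsum_le_tsum hrate).trans_lt
      (tsum_geometric_lt_top.2 (by norm_num))⟩
  · exact ofReal_abs_le_two_mul_sup_iSup_abs_sub (f · x) (g x) n
end

section
/- Suppose H : 𝒫(ℝ^d) → [0,∞] is monotone, finitely subadditive, and evanescent. If f : ℝ^d → [-∞,∞] is quasicontinuous and ∫|f| dH < ∞, then there exists a sequence (φ_n) of continuous compactly supported functions on ℝ^d such that lim_{n→∞} ∫|φ_n − f| dH = 0. -/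
open MeasureTheory Filter Set Topology
open scoped ENNReal

/-!
Fix `ε > 0`. Choose `M` and `δ` so that the layers `t > M` and `0 < t ≤ δ` contribute little to
`∫ |f| dH`, and an open `ω` of small capacity off which `f` is finite and continuous; by Tietze,
`f = G` off `ω` for a continuous real `G`. The closed set `F = ωᶜ ∩ {δ ≤ |G|}` lies in the open
set `ω ∪ {δ/2 < |G|}`, whose capacity is finite because `∫ |f| dH < ∞`, so evanescence yields `r`
with `H (F \ B_r)` small. Take `φ = χ · clamp_M ∘ G` with `χ` a compactly supported cutoff equal
to `1` on `B_r`. Off `E = ω ∪ (F \ B_r)` we have `|φ - f| ≤ |f|`, and `|φ - f| ≤ (|f| - M)⁺`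
where `|f| > δ`; everywhere `|φ - f| ≤ |f| + M`. Hence `H {|φ - f| > t}` is at most
`H E + H {|f| > t}` for `t ≤ δ`, `H E + H {|f| > t + M}` for `δ < t ≤ 2M` and `H {|f| > t - M}`
for `t > 2M`, and integrating over `t` gives `∫ |φ - f| dH ≤ (δ + 2M) H E + (small)`.
-/

section SetFunction

variable {α : Type*} {H : Set α → ℝ≥0∞}

lemma MonotoneSF.antitone_superlevel (hmono : MonotoneSF H) (u : α → ℝ≥0∞) :
    Antitone fun t : ℝ => H {x | ENNReal.ofReal t < u x} :=
  fun _ _ hst => hmono fun _ hx => (ENNReal.ofReal_le_ofReal hst).trans_lt hx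

lemma MonotoneSF.le_add_of_subset_union (hmono : MonotoneSF H) (hsub : FinitelySubadditive H)
    {S E F : Set α} (h : S ⊆ E ∪ F) : H S ≤ H E + H F :=
  (hmono h).trans (hsub E F)

end SetFunction

lemma setLIntegral_Ioi_comp_add_right (A : ℝ → ℝ≥0∞) (a b : ℝ) :
    ∫⁻ t in Ioi a, A (t + b) = ∫⁻ t in Ioi (a + b), A t := by
  have := (measurePreserving_add_right volume b).setLIntegral_comp_preimage_emb
    (measurableEmbedding_addRight b) A (Ioi (a + b))
  rwa [preimage_add_const_Ioi, add_sub_cancel_right] at this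

lemma ne_top_of_antitone_of_setLIntegral_Ioi_ne_top {A : ℝ → ℝ≥0∞} (hA : Antitone A)
    (hfin : ∫⁻ t in Ioi 0, A t ≠ ⊤) {t : ℝ} (ht : 0 < t) : A t ≠ ⊤ := by
  refine fun htop => hfin (eq_top_iff.mpr ?_)
  calc ⊤ = ∫⁻ _ in Ioc 0 t, A t := by
        rw [setLIntegral_const, htop, Real.volume_Ioc, sub_zero,
          ENNReal.top_mul (ENNReal.ofReal_pos.mpr ht).ne']
    _ ≤ ∫⁻ s in Ioc 0 t, A s := setLIntegral_mono hA.measurable fun s hs => hA hs.2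
    _ ≤ ∫⁻ s in Ioi 0, A s := lintegral_mono_set Ioc_subset_Ioi_self

lemma tendsto_setLIntegral_zero_of_eventually_notMem {ι : Type*} {l : Filter ι}
    [l.IsCountablyGenerated] {A : ℝ → ℝ≥0∞} (hA : Measurable A) {T : Set ℝ}
    (hfin : ∫⁻ t in T, A t ≠ ⊤) {s : ι → Set ℝ} (hs : ∀ i, MeasurableSet (s i))
    (hsT : ∀ᶠ i in l, s i ⊆ T) (hlim : ∀ t, ∀ᶠ i in l, t ∉ s i) :
    Tendsto (fun i => ∫⁻ t in s i, A t) l (𝓝 0) := by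
  have hrestrict : ∀ᶠ i in l, ∫⁻ t in T, (s i).indicator A t = ∫⁻ t in s i, A t :=
    hsT.mono fun i hi => by
      rw [lintegral_indicator (hs i), Measure.restrict_restrict (hs i), inter_eq_left.mpr hi]
  refine Tendsto.congr' hrestrict ?_
  simpa using tendsto_lintegral_filter_of_dominated_convergence A
    (Eventually.of_forall fun i => hA.indicator (hs i))
    (Eventually.of_forall fun i => ae_of_all _ (indicator_le_self (s i) A)) hfin
    (ae_of_all _ fun t => tendsto_const_nhds.congr' <|
      (hlim t).mono fun i hi => (indicator_of_notMem hi A).symm)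

lemma tendsto_setLIntegral_Ioi_atTop {A : ℝ → ℝ≥0∞} (hA : Measurable A)
    (hfin : ∫⁻ t in Ioi 0, A t ≠ ⊤) :
    Tendsto (fun M : ℝ => ∫⁻ t in Ioi M, A t) atTop (𝓝 0) :=
  tendsto_setLIntegral_zero_of_eventually_notMem hA hfin (fun _ => measurableSet_Ioi)
    ((eventually_ge_atTop 0).mono fun _ hM => Ioi_subset_Ioi hM)
    fun t => (eventually_ge_atTop t).mono fun _ hM ht => (not_lt.mpr hM) ht

lemma tendsto_setLIntegral_Ioc_zero {A : ℝ → ℝ≥0∞} (hA : Measurable A)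
    (hfin : ∫⁻ t in Ioi 0, A t ≠ ⊤) :
    Tendsto (fun δ : ℝ => ∫⁻ t in Ioc 0 δ, A t) (𝓝[>] 0) (𝓝 0) := by
  refine tendsto_setLIntegral_zero_of_eventually_notMem hA hfin (fun _ => measurableSet_Ioc)
    (Eventually.of_forall fun _ => Ioc_subset_Ioi_self) fun t => ?_
  rcases le_or_gt t 0 with ht | ht
  · exact Eventually.of_forall fun _ h => (not_lt.mpr ht) h.1
  · filter_upwards [nhdsWithin_le_nhds (eventually_lt_nhds ht)] with _ hδ h
    exact (not_le.mpr hδ) h.2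

lemma setLIntegral_Ioi_zero_le_of_piecewise_le {A B : ℝ → ℝ≥0∞} (hA : Measurable A) {c : ℝ≥0∞}
    {δ M : ℝ} (hδ : 0 ≤ δ) (h₁ : ∀ t ∈ Ioc 0 δ, B t ≤ c + A t)
    (h₂ : ∀ t ∈ Ioc δ (2 * M), B t ≤ c + A (t + M)) (h₃ : ∀ t ∈ Ioi (2 * M), B t ≤ A (t - M)) :
    ∫⁻ t in Ioi 0, B t ≤
      c * (ENNReal.ofReal δ + ENNReal.ofReal (2 * M)) + (∫⁻ t in Ioc 0 δ, A t)
        + 2 * ∫⁻ t in Ioi M, A t := by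
  have hcover : Ioi (0 : ℝ) ⊆ Ioc 0 δ ∪ Ioc δ (2 * M) ∪ Ioi (2 * M) := fun t ht => by
    rcases le_or_gt t δ with htδ | htδ
    · exact Or.inl (Or.inl ⟨ht, htδ⟩)
    rcases le_or_gt t (2 * M) with htM | htM
    · exact Or.inl (Or.inr ⟨htδ, htM⟩)
    · exact Or.inr htM
  have hI₁ : ∫⁻ t in Ioc 0 δ, B t ≤ c * ENNReal.ofReal δ + ∫⁻ t in Ioc 0 δ, A t :=
    calc ∫⁻ t in Ioc 0 δ, B t ≤ ∫⁻ t in Ioc 0 δ, (c + A t) :=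
          setLIntegral_mono (measurable_const.add hA) h₁
      _ = c * ENNReal.ofReal δ + ∫⁻ t in Ioc 0 δ, A t := by
          rw [lintegral_add_left measurable_const, setLIntegral_const, Real.volume_Ioc, sub_zero]
  have hI₂ : ∫⁻ t in Ioc δ (2 * M), B t ≤ c * ENNReal.ofReal (2 * M) + ∫⁻ t in Ioi M, A t :=
    calc ∫⁻ t in Ioc δ (2 * M), B t ≤ ∫⁻ t in Ioc δ (2 * M), (c + A (t + M)) :=
          setLIntegral_mono (measurable_const.add (hA.comp (measurable_add_const M))) h₂
      _ = c * ENNReal.ofReal (2 * M - δ) + ∫⁻ t in Ioc δ (2 * M), A (t + M) := by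
          rw [lintegral_add_left measurable_const, setLIntegral_const, Real.volume_Ioc]
      _ ≤ c * ENNReal.ofReal (2 * M) + ∫⁻ t in Ioi 0, A (t + M) := by
          gcongr
          · linarith
          · exact Ioc_subset_Ioi_self.trans (Ioi_subset_Ioi hδ)
      _ = c * ENNReal.ofReal (2 * M) + ∫⁻ t in Ioi M, A t := by
          rw [setLIntegral_Ioi_comp_add_right, zero_add]
  have hI₃ : ∫⁻ t in Ioi (2 * M), B t ≤ ∫⁻ t in Ioi M, A t :=
    calc ∫⁻ t in Ioi (2 * M), B t ≤ ∫⁻ t in Ioi (2 * M), A (t + -M) :=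
          setLIntegral_mono (hA.comp (measurable_add_const _)) h₃
      _ = ∫⁻ t in Ioi M, A t := by
          rw [setLIntegral_Ioi_comp_add_right, two_mul, add_neg_cancel_right]
  calc ∫⁻ t in Ioi 0, B t
      ≤ (∫⁻ t in Ioc 0 δ, B t) + (∫⁻ t in Ioc δ (2 * M), B t) + ∫⁻ t in Ioi (2 * M), B t :=
        (lintegral_mono_set hcover).trans <| (lintegral_union_le _ _ _).trans <|
          add_le_add_left (lintegral_union_le _ _ _) _
    _ ≤ (c * ENNReal.ofReal δ + ∫⁻ t in Ioc 0 δ, A t)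
          + (c * ENNReal.ofReal (2 * M) + ∫⁻ t in Ioi M, A t) + ∫⁻ t in Ioi M, A t := by
        gcongr
    _ = _ := by ring

lemma choquet_le_of_bounds {α : Type*} {H : Set α → ℝ≥0∞} (hmono : MonotoneSF H)
    (hsub : FinitelySubadditive H) {g u : α → ℝ≥0∞} {E : Set α} {δ M : ℝ} (hδ : 0 ≤ δ)
    (hM : 0 ≤ M) (hglobal : ∀ x, g x ≤ u x + ENNReal.ofReal M) (hsmall : ∀ x ∉ E, g x ≤ u x)
    (hlarge : ∀ x ∉ E, ENNReal.ofReal δ < u x → g x ≤ u x - ENNReal.ofReal M) :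
    choquet H g ≤ H E * (ENNReal.ofReal δ + ENNReal.ofReal (2 * M))
      + (∫⁻ t in Ioc 0 δ, H {x | ENNReal.ofReal t < u x})
      + 2 * ∫⁻ t in Ioi M, H {x | ENNReal.ofReal t < u x} := by
  refine setLIntegral_Ioi_zero_le_of_piecewise_le (hmono.antitone_superlevel u).measurable hδ
    (fun t _ => hmono.le_add_of_subset_union hsub fun x hx => ?_)
    (fun t ht => hmono.le_add_of_subset_union hsub fun x hx => ?_)
    (fun t ht => hmono fun x hx => ?_)
  · by_cases hxE : x ∈ E
    · exact Or.inl hxE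
    · exact Or.inr (hx.trans_le (hsmall x hxE))
  · by_cases hxE : x ∈ E
    · exact Or.inl hxE
    have htu : ENNReal.ofReal t < u x := hx.trans_le (hsmall x hxE)
    have hδu : ENNReal.ofReal δ < u x :=
      (ENNReal.ofReal_le_ofReal ht.1.le).trans_lt htu
    have htM : ENNReal.ofReal t < u x - ENNReal.ofReal M := hx.trans_le (hlarge x hxE hδu)
    refine Or.inr ?_
    show ENNReal.ofReal (t + M) < u x
    rwa [ENNReal.ofReal_add (hδ.trans ht.1.le) hM, ← lt_tsub_iff_right]
  · show ENNReal.ofReal (t - M) < u x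
    rw [ENNReal.ofReal_sub _ hM]
    refine ENNReal.sub_lt_of_lt_add (ENNReal.ofReal_le_ofReal ?_) (hx.trans_le (hglobal x))
    linarith [mem_Ioi.mp ht]

lemma abs_max_neg_min_le {M : ℝ} (hM : 0 ≤ M) (y : ℝ) : |max (-M) (min M y)| ≤ M :=
  abs_le.mpr ⟨le_max_left _ _, max_le (neg_le_self hM) (min_le_left _ _)⟩

lemma abs_mul_max_neg_min_sub_le {c M : ℝ} (hc₀ : 0 ≤ c) (hc₁ : c ≤ 1) (hM : 0 ≤ M) (y : ℝ) :
    |c * max (-M) (min M y) - y| ≤ |y| := by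
  rw [abs_le]
  rcases abs_cases y with ⟨hy, hy0⟩ | ⟨hy, hy0⟩ <;>
    rcases min_cases M y with ⟨h1, _⟩ | ⟨h1, _⟩ <;>
    rcases max_cases (-M) (min M y) with ⟨h2, _⟩ | ⟨h2, _⟩ <;>
    rw [hy] <;> rw [h2] <;> (try rw [h1]) <;> constructor <;> nlinarith

lemma ofReal_abs_max_neg_min_sub_le {M : ℝ} (hM : 0 ≤ M) (y : ℝ) :
    ENNReal.ofReal |max (-M) (min M y) - y| ≤ ENNReal.ofReal |y| - ENNReal.ofReal M := by
  rw [← ENNReal.ofReal_sub _ hM, ENNReal.ofReal_le_ofReal_iff']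
  rcases le_or_gt |y| M with hyM | hyM
  · obtain ⟨hy₁, hy₂⟩ := abs_le.mp hyM
    exact Or.inr (by rw [min_eq_right hy₂, max_eq_right hy₁, sub_self, abs_zero])
  · refine Or.inl (abs_le.mpr ?_)
    rcases abs_cases y with ⟨hy, _⟩ | ⟨hy, _⟩ <;>
      rcases min_cases M y with ⟨h1, _⟩ | ⟨h1, _⟩ <;>
      rcases max_cases (-M) (min M y) with ⟨h2, _⟩ | ⟨h2, _⟩ <;>
      rw [h2] <;> (try rw [h1]) <;> constructor <;> linarith

lemma EReal.abs_coe_sub_le (a : ℝ) (y : EReal) :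
    ((a : EReal) - y).abs ≤ y.abs + ENNReal.ofReal |a| := by
  induction y using EReal.rec with
  | bot => simp
  | top => simp
  | coe b =>
    rw [← EReal.coe_sub, EReal.abs_def, EReal.abs_def, ← ENNReal.ofReal_add (abs_nonneg _)
      (abs_nonneg _)]
    exact ENNReal.ofReal_le_ofReal ((abs_sub _ _).trans_eq (add_comm _ _))

lemma exists_continuous_coe_eq_of_continuousOn {X : Type*} [TopologicalSpace X] [NormalSpace X]
    {f : X → EReal} {C : Set X} (hC : IsClosed C) (hfin : ∀ x ∈ C, f x ≠ ⊤ ∧ f x ≠ ⊥)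
    (hf : ContinuousOn f C) : ∃ G : X → ℝ, Continuous G ∧ ∀ x ∈ C, f x = G x := by
  have hcont : ContinuousOn (fun x => (f x).toReal) C := fun x hx =>
    (EReal.tendsto_toReal (hfin x hx).1 (hfin x hx).2).comp (hf x hx)
  obtain ⟨G, hG⟩ := ContinuousMap.exists_restrict_eq hC ⟨_, hcont.domRestrict⟩
  refine ⟨G, G.continuous, fun x hx => ?_⟩
  rw [show G x = (f x).toReal from DFunLike.congr_fun hG ⟨x, hx⟩]
  exact (EReal.coe_toReal (hfin x hx).1 (hfin x hx).2).symm

lemma choquet_abs_cutoff_clamp_sub_le {X : Type*} {H : Set X → ℝ≥0∞} (hmono : MonotoneSF H)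
    (hsub : FinitelySubadditive H) {f : X → EReal} {ω : Set X} {G : X → ℝ}
    (hfG : ∀ x ∉ ω, f x = G x) {χ : X → ℝ} (hχ : ∀ x, χ x ∈ Icc (0 : ℝ) 1) {K : Set X}
    (hχK : EqOn χ 1 K) {δ M : ℝ} (hδ : 0 ≤ δ) (hM : 0 ≤ M) :
    choquet H (fun x => ((χ x * max (-M) (min M (G x)) : ℝ) - f x).abs) ≤
      H (ω ∪ (ωᶜ ∩ {x | δ ≤ |G x|}) \ K) * (ENNReal.ofReal δ + ENNReal.ofReal (2 * M))
        + (∫⁻ t in Ioc 0 δ, H {x | ENNReal.ofReal t < (f x).abs})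
        + 2 * ∫⁻ t in Ioi M, H {x | ENNReal.ofReal t < (f x).abs} := by
  have habs_sub : ∀ x ∉ ω, ∀ a : ℝ, ((a : EReal) - f x).abs = ENNReal.ofReal |a - G x| :=
    fun x hx a => by rw [hfG x hx, ← EReal.coe_sub, EReal.abs_def]
  have habs : ∀ x ∉ ω, (f x).abs = ENNReal.ofReal |G x| :=
    fun x hx => by rw [hfG x hx, EReal.abs_def]
  refine choquet_le_of_bounds hmono hsub hδ hM (fun x => ?_) (fun x hx => ?_) fun x hx hδx => ?_
  · refine (EReal.abs_coe_sub_le _ _).trans ?_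
    gcongr
    rw [abs_mul]
    exact (mul_le_of_le_one_left (abs_nonneg _) (abs_le.mpr ⟨by linarith [(hχ x).1],
      (hχ x).2⟩)).trans (abs_max_neg_min_le hM _)
  · have hxω : x ∉ ω := fun h => hx (Or.inl h)
    rw [habs_sub x hxω, habs x hxω]
    exact ENNReal.ofReal_le_ofReal (abs_mul_max_neg_min_sub_le (hχ x).1 (hχ x).2 hM _)
  · have hxω : x ∉ ω := fun h => hx (Or.inl h)
    rw [habs x hxω, ENNReal.ofReal_lt_ofReal_iff_of_nonneg hδ] at hδx
    have hxK : x ∈ K := by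
      by_contra h
      exact hx (Or.inr ⟨⟨hxω, hδx.le⟩, h⟩)
    rw [habs_sub x hxω, habs x hxω, hχK hxK, Pi.one_apply, one_mul]
    exact ofReal_abs_max_neg_min_sub_le hM _

lemma Evanescent.exists_measure_diff_ball_le {d : ℕ}
    {H : Set (EuclideanSpace ℝ (Fin d)) → ℝ≥0∞} (hev : Evanescent H) (hmono : MonotoneSF H)
    (hsub : FinitelySubadditive H) {ω : Set (EuclideanSpace ℝ (Fin d))} (hω : IsOpen ω)
    (hωfin : H ω < ⊤) {G : EuclideanSpace ℝ (Fin d) → ℝ} (hG : Continuous G) {δ : ℝ}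
    (hδ : 0 < δ) (hGfin : H (ωᶜ ∩ {x | δ / 2 < |G x|}) < ⊤) {η : ℝ≥0∞} (hη : 0 < η) :
    ∃ r : ℝ, H ((ωᶜ ∩ {x | δ ≤ |G x|}) \ Metric.ball 0 r) ≤ η := by
  have hUfin : H (ω ∪ {x | δ / 2 < |G x|}) < ⊤ := by
    refine (hmono.le_add_of_subset_union hsub fun x hx => ?_).trans_lt
      (ENNReal.add_lt_top.mpr ⟨hωfin, hGfin⟩)
    by_cases hxω : x ∈ ω
    · exact Or.inl hxω
    · exact Or.inr ⟨hxω, hx.resolve_left hxω⟩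
  exact ((hev _ (hω.union (isOpen_lt continuous_const hG.abs)) hUfin _
    (hω.isClosed_compl.inter (isClosed_le continuous_const hG.abs))
    (fun x hx => Or.inr ((half_lt_self hδ).trans_le hx.2))).eventually
    (eventually_le_nhds hη)).exists

lemma exists_continuous_hasCompactSupport_choquet_sub_le {d : ℕ}
    {H : Set (EuclideanSpace ℝ (Fin d)) → ℝ≥0∞} (hmono : MonotoneSF H)
    (hsub : FinitelySubadditive H) (hev : Evanescent H) {f : EuclideanSpace ℝ (Fin d) → EReal}
    (hf : QuasicontinuousE H f) (hint : choquet H (fun x => (f x).abs) < ⊤) {ε : ℝ}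
    (hε : 0 < ε) :
    ∃ φ : EuclideanSpace ℝ (Fin d) → ℝ, Continuous φ ∧ HasCompactSupport φ ∧
      choquet H (fun x => ((φ x : EReal) - f x).abs) ≤ ENNReal.ofReal ε := by
  set A : ℝ → ℝ≥0∞ := fun t => H {x | ENNReal.ofReal t < (f x).abs}
  have hA : Antitone A := hmono.antitone_superlevel _
  have hfin : ∫⁻ t in Ioi 0, A t ≠ ⊤ := hint.ne
  obtain ⟨M, hMtail, hM⟩ := (((tendsto_setLIntegral_Ioi_atTop hA.measurable hfin).eventually
    (eventually_le_nhds (ENNReal.ofReal_pos.mpr (by positivity : 0 < ε / 8)))).and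
    (eventually_gt_atTop 0)).exists
  obtain ⟨δ, hδhead, hδ : 0 < δ⟩ := (((tendsto_setLIntegral_Ioc_zero hA.measurable hfin).eventually
    (eventually_le_nhds (ENNReal.ofReal_pos.mpr (by positivity : 0 < ε / 4)))).and
    self_mem_nhdsWithin).exists
  set ε' := ε / (4 * (δ + 2 * M))
  have hε' : 0 < ε' := by positivity
  obtain ⟨ω, hωopen, hωH, hωfin, hωcont⟩ := hf ε' hε'
  obtain ⟨G, hG, hfG⟩ :=
    exists_continuous_coe_eq_of_continuousOn hωopen.isClosed_compl hωfin hωcont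
  have hGfin : H (ωᶜ ∩ {x | δ / 2 < |G x|}) < ⊤ := by
    refine (hmono fun x hx => ?_).trans_lt
      (ne_top_of_antitone_of_setLIntegral_Ioi_ne_top hA hfin (half_pos hδ)).lt_top
    show ENNReal.ofReal (δ / 2) < (f x).abs
    rw [hfG x hx.1, EReal.abs_def]
    exact (ENNReal.ofReal_lt_ofReal_iff_of_nonneg (half_pos hδ).le).mpr hx.2
  obtain ⟨r, hr⟩ := hev.exists_measure_diff_ball_le hmono hsub hωopen
    (hωH.trans_lt ENNReal.ofReal_lt_top) hG hδ hGfin (ENNReal.ofReal_pos.mpr hε')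
  obtain ⟨χ, hχ1, -, hχsupp, hχ01⟩ := exists_continuous_one_zero_of_isCompact
    (isCompact_closedBall (0 : EuclideanSpace ℝ (Fin d)) r) isClosed_empty (disjoint_empty _)
  refine ⟨fun x => χ x * max (-M) (min M (G x)), by fun_prop, hχsupp.mul_right,
    (choquet_abs_cutoff_clamp_sub_le hmono hsub hfG hχ01
      (hχ1.mono Metric.ball_subset_closedBall) hδ.le hM.le).trans ?_⟩
  calc _ ≤ (ENNReal.ofReal ε' + ENNReal.ofReal ε') * (ENNReal.ofReal δ + ENNReal.ofReal (2 * M))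
          + ENNReal.ofReal (ε / 4) + 2 * ENNReal.ofReal (ε / 8) := by
        gcongr
        exact (hsub _ _).trans (add_le_add hωH hr)
    _ = ENNReal.ofReal ((ε' + ε') * (δ + 2 * M) + ε / 4 + 2 * (ε / 8)) := by
        rw [← ENNReal.ofReal_add hε'.le hε'.le, ← ENNReal.ofReal_add hδ.le (by positivity),
          ← ENNReal.ofReal_mul (by positivity), ← ENNReal.ofReal_ofNat 2,
          ← ENNReal.ofReal_mul zero_le_two, ← ENNReal.ofReal_add (by positivity) (by positivity),
          ← ENNReal.ofReal_add (by positivity) (by positivity)]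
    _ = ENNReal.ofReal ε := by
        congr 1
        simp only [ε']
        field_simp
        ring

/-- Approximation of quasicontinuous functions with finite Choquet integral
by continuous compactly supported functions, under evanescence. -/
theorem quasicontinuous_approx_compactSupport {d : ℕ}
    (H : Set (EuclideanSpace ℝ (Fin d)) → ℝ≥0∞)
    (hmono : MonotoneSF H) (hsub : FinitelySubadditive H) (hev : Evanescent H)
    (f : EuclideanSpace ℝ (Fin d) → EReal) (hf : QuasicontinuousE H f)
    (hint : choquet H (fun x => (f x).abs) < ⊤) :
    ∃ φ : ℕ → EuclideanSpace ℝ (Fin d) → ℝ,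
      (∀ n, Continuous (φ n) ∧ HasCompactSupport (φ n)) ∧
      Filter.Tendsto (fun n => choquet H (fun x => ((φ n x : EReal) - f x).abs))
        Filter.atTop (nhds 0) := by
  choose φ hφc hφs hφε using fun n : ℕ =>
    exists_continuous_hasCompactSupport_choquet_sub_le hmono hsub hev hf hint
      (Nat.one_div_pos_of_nat (n := n))
  refine ⟨φ, fun n => ⟨hφc n, hφs n⟩, ?_⟩
  have hlim : Tendsto (fun n : ℕ => ENNReal.ofReal (1 / ((n : ℝ) + 1))) atTop (𝓝 0) := by
    simpa using ENNReal.tendsto_ofReal tendsto_one_div_add_atTop_nhds_zero_nat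
  exact tendsto_of_tendsto_of_tendsto_of_le_of_le tendsto_const_nhds hlim (fun _ => zero_le) hφε
end

section
/- Suppose H : 𝒫(ℝ^d) → [0,∞] is monotone and strongly subadditive. If (f_n) is a sequence of real-valued functions on ℝ^d such that the partial sums (∑_{n=0}^k f_n)_{k∈ℕ} converge quasi-uniformly to a function F : ℝ^d → ℝ, then ∫|F| dH ≤ ∑_{n=0}^∞ ∫|f_n| dH. -/
open MeasureTheory Filter Set Topology
open scoped ENNReal

/-!
Strong subadditivity makes the Choquet integral `J` subadditive. Raising `f` by `c` on a set `B`
costs at most `c H(B)`: at each level `t`, strong subadditivity trades `{f + c 1_B > t}` for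
`B ∩ {f > t - c}`, a translate of the level sets of `f`. Adding a staircase below `v` step by
step costs a lower Riemann sum of `J(v)`, so `J(u + stairs) ≤ J(u) + J(v)`. For `r > 1`, the level set `{u + v > t}` lies in
`{u + stairs > t / r}` as soon as the stairs are fine and tall enough, so Fatou's lemma and the
dilation `t ↦ t / r` give `J(u + v) ≤ r (J(u) + J(v))`.

The same argument bounds `J(|F|)` by the Choquet integrals of the partial sums of the `|f_n|`,
hence by `∑ J(|f_n|)`: quasi-uniform convergence puts `{|F| > t}` inside
`E ∪ {∑_{n ≤ k} |f_n| > t / r}` for all large `k`, with one exceptional set `E` of small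
capacity, which is paid for only on a bounded range of levels `t`.
-/

theorem setLIntegral_Ioi_comp_sub_const (w : ℝ → ℝ≥0∞) (c : ℝ) :
    ∫⁻ t in Ioi c, w (t - c) = ∫⁻ s in Ioi 0, w s := by
  have := (measurePreserving_sub_right volume c).setLIntegral_comp_preimage_emb
    (measurableEmbedding_subRight c) w (Ioi 0)
  rwa [preimage_sub_const_Ioi, zero_add] at this

theorem setLIntegral_Ioi_zero_comp_div (w : ℝ → ℝ≥0∞) {r : ℝ} (hr : 0 < r) :
    ∫⁻ t in Ioi 0, w (t / r) = ENNReal.ofReal r * ∫⁻ s in Ioi 0, w s := by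
  have hemb : MeasurableEmbedding (fun t : ℝ => t / r) := by
    simpa only [div_eq_mul_inv] using measurableEmbedding_mulRight₀ (inv_ne_zero hr.ne')
  have hmap : Measure.map (fun t : ℝ => t / r) volume = ENNReal.ofReal r • volume := by
    simpa [div_eq_mul_inv, abs_of_pos hr] using Real.map_volume_mul_right (inv_ne_zero hr.ne')
  have hpre : (fun t : ℝ => t / r) ⁻¹' Ioi 0 = Ioi 0 := by
    ext t; simp [div_pos_iff_of_pos_right hr]
  calc ∫⁻ t in Ioi 0, w (t / r)
      = ∫⁻ t in (fun t : ℝ => t / r) ⁻¹' Ioi 0, w (t / r) := by rw [hpre]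
    _ = ∫⁻ s in Ioi 0, w s ∂(Measure.map (fun t : ℝ => t / r) volume) := by
        rw [hemb.restrict_map, hemb.lintegral_map]
    _ = ENNReal.ofReal r * ∫⁻ s in Ioi 0, w s := by
        rw [hmap, Measure.restrict_smul, lintegral_smul_measure, smul_eq_mul]

theorem setLIntegral_Ioi_eq_iSup_Ioc (w : ℝ → ℝ≥0∞) :
    ∫⁻ t in Ioi 0, w t = ⨆ n : ℕ, ∫⁻ t in Ioc 0 (n : ℝ), w t := by
  rw [← setLIntegral_iUnion_of_directed w]
  · rw [iUnion_Ioc_eq_Ioi_self_iff.2 fun t _ => exists_nat_ge t]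
  · exact Monotone.directed_le fun m n hmn => Ioc_subset_Ioc_right (Nat.mono_cast hmn)

theorem ENNReal.le_of_forall_one_lt_le_ofReal_mul {x y : ℝ≥0∞}
    (h : ∀ r : ℝ, 1 < r → x ≤ ENNReal.ofReal r * y) : x ≤ y := by
  refine ENNReal.le_of_forall_lt_one_mul_le fun a ha => ?_
  rcases eq_or_ne a 0 with rfl | ha0
  · simp
  have hat : a ≠ ⊤ := ha.ne_top
  have hpos : 0 < a.toReal := ENNReal.toReal_pos ha0 hat
  have hlt : a.toReal < 1 := by simpa using ENNReal.toReal_strict_mono ENNReal.one_ne_top ha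
  calc a * x ≤ a * (ENNReal.ofReal a.toReal⁻¹ * y) := by
        gcongr; exact h _ ((one_lt_inv₀ hpos).2 hlt)
    _ = y := by
      rw [← mul_assoc, ENNReal.ofReal_inv_of_pos hpos, ENNReal.ofReal_toReal hat,
        ENNReal.mul_inv_cancel ha0 hat, one_mul]

section Choquet

variable {α : Type*} {H : Set α → ℝ≥0∞}

def superlevel (f : α → ℝ≥0∞) (t : ℝ) : Set α := {x | ENNReal.ofReal t < f x}

theorem choquet_eq_setLIntegral_superlevel (H : Set α → ℝ≥0∞) (f : α → ℝ≥0∞) :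
    choquet H f = ∫⁻ t in Ioi 0, H (superlevel f t) := rfl

theorem superlevel_antitone (f : α → ℝ≥0∞) : Antitone (superlevel f) :=
  fun _ _ hst _ hx => (ENNReal.ofReal_le_ofReal hst).trans_lt hx

theorem superlevel_mono {f g : α → ℝ≥0∞} (hfg : f ≤ g) (t : ℝ) :
    superlevel f t ⊆ superlevel g t :=
  fun x hx => hx.trans_le (hfg x)

theorem MonotoneSF.measurable_comp_superlevel (hmono : MonotoneSF H) (f : α → ℝ≥0∞) :
    Measurable fun t => H (superlevel f t) :=
  Antitone.measurable fun _ _ hst => hmono (superlevel_antitone f hst)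

theorem StronglySubadditive.union_le (hssa : StronglySubadditive H) (E F : Set α) :
    H (E ∪ F) ≤ H E + H F :=
  le_add_self.trans (hssa E F)

theorem inter_superlevel_add_indicator (f : α → ℝ≥0∞) (B : Set α) {c t : ℝ} (hc : 0 ≤ c)
    (hct : c ≤ t) :
    B ∩ superlevel (f + B.indicator fun _ => ENNReal.ofReal c) t =
      B ∩ superlevel f (t - c) := by
  ext x
  simp only [mem_inter_iff, superlevel, mem_ofPred_eq, and_congr_right_iff]
  intro hB
  rw [Pi.add_apply, indicator_of_mem hB, ← sub_add_cancel t c,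
    ENNReal.ofReal_add (sub_nonneg.2 hct) hc, add_sub_cancel_right,
    ENNReal.add_lt_add_iff_right ENNReal.ofReal_ne_top]

theorem StronglySubadditive.superlevel_add_indicator (hssa : StronglySubadditive H)
    (f : α → ℝ≥0∞) (B : Set α) (c t : ℝ) :
    H (superlevel (f + B.indicator fun _ => ENNReal.ofReal c) t) + H (B ∩ superlevel f t) ≤
      H (superlevel f t) + H (B ∩ superlevel (f + B.indicator fun _ => ENNReal.ofReal c) t) := by
  set g := f + B.indicator fun _ => ENNReal.ofReal c
  have hfg : superlevel f t ⊆ superlevel g t := superlevel_mono (fun x => le_self_add) t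
  have hunion : superlevel f t ∪ (B ∩ superlevel g t) = superlevel g t := by
    refine (union_subset hfg inter_subset_right).antisymm fun x hx => ?_
    by_cases hB : x ∈ B
    · exact Or.inr ⟨hB, hx⟩
    · left
      simpa [superlevel, g, indicator_of_notMem hB] using hx
  have hinter : superlevel f t ∩ (B ∩ superlevel g t) = B ∩ superlevel f t := by
    rw [inter_left_comm, inter_eq_left.2 hfg]
  simpa only [hunion, hinter, add_comm] using hssa (superlevel f t) (B ∩ superlevel g t)

theorem setLIntegral_inter_superlevel_add_indicator_le (hmono : MonotoneSF H)
    (f : α → ℝ≥0∞) (B : Set α) {c : ℝ} (hc : 0 ≤ c) :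
    ∫⁻ t in Ioi 0, H (B ∩ superlevel (f + B.indicator fun _ => ENNReal.ofReal c) t) ≤
      ENNReal.ofReal c * H B + ∫⁻ t in Ioi 0, H (B ∩ superlevel f t) := by
  conv_lhs => rw [← Ioc_union_Ioi_eq_Ioi hc]
  refine (lintegral_union_le _ _ _).trans (add_le_add ?_ (le_of_eq ?_))
  · calc ∫⁻ t in Ioc 0 c, H (B ∩ superlevel _ t) ≤ ∫⁻ _ in Ioc 0 c, H B :=
          lintegral_mono fun t => hmono inter_subset_left
      _ = ENNReal.ofReal c * H B := by
          rw [setLIntegral_const, Real.volume_Ioc, sub_zero, mul_comm]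
  · rw [setLIntegral_congr_fun measurableSet_Ioi
      fun t ht => congrArg H (inter_superlevel_add_indicator f B hc (le_of_lt ht))]
    exact setLIntegral_Ioi_comp_sub_const (fun s => H (B ∩ superlevel f s)) c

theorem choquet_add_indicator_le (hmono : MonotoneSF H) (hssa : StronglySubadditive H)
    (f : α → ℝ≥0∞) (B : Set α) {c : ℝ} (hc : 0 ≤ c) :
    choquet H (f + B.indicator fun _ => ENNReal.ofReal c) ≤
      choquet H f + ENNReal.ofReal c * H B := by
  set g := f + B.indicator fun _ => ENNReal.ofReal c
  set I : (α → ℝ≥0∞) → ℝ≥0∞ := fun h => ∫⁻ t in Ioi 0, H (B ∩ superlevel h t)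
  rcases eq_or_ne (choquet H f) ⊤ with hf | hf
  · simp [hf]
  have hIf : I f ≠ ⊤ :=
    ne_top_of_le_ne_top hf (lintegral_mono fun t => hmono inter_subset_right)
  have hsub : choquet H g + I f ≤ choquet H f + I g := by
    simp only [I, choquet_eq_setLIntegral_superlevel]
    rw [← lintegral_add_left (hmono.measurable_comp_superlevel g),
      ← lintegral_add_left (hmono.measurable_comp_superlevel f)]
    exact lintegral_mono fun t => hssa.superlevel_add_indicator f B c t
  refine (ENNReal.add_le_add_iff_right hIf).1 ?_
  calc choquet H g + I f ≤ choquet H f + I g := hsub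
    _ ≤ choquet H f + (ENNReal.ofReal c * H B + I f) :=
        add_le_add_right (setLIntegral_inter_superlevel_add_indicator_le hmono f B hc) _
    _ = choquet H f + ENNReal.ofReal c * H B + I f := (add_assoc _ _ _).symm

theorem choquet_add_sum_indicator_le (hmono : MonotoneSF H) (hssa : StronglySubadditive H)
    (f : α → ℝ≥0∞) (B : ℕ → Set α) {c : ℝ} (hc : 0 ≤ c) (N : ℕ) :
    choquet H (f + ∑ i ∈ Finset.range N, (B i).indicator fun _ => ENNReal.ofReal c) ≤
      choquet H f + ∑ i ∈ Finset.range N, ENNReal.ofReal c * H (B i) := by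
  induction N with
  | zero => simp
  | succ N ih =>
    rw [Finset.sum_range_succ, Finset.sum_range_succ, ← add_assoc, ← add_assoc]
    exact (choquet_add_indicator_le hmono hssa _ (B N) hc).trans (add_le_add_left ih _)

theorem sum_ofReal_mul_superlevel_le_choquet (hmono : MonotoneSF H) (v : α → ℝ≥0∞) {c : ℝ}
    (hc : 0 ≤ c) (N : ℕ) :
    ∑ i ∈ Finset.range N, ENNReal.ofReal c * H (superlevel v (c * (i + 1))) ≤
      choquet H v := by
  suffices h : ∑ i ∈ Finset.range N, ENNReal.ofReal c * H (superlevel v (c * (i + 1))) ≤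
      ∫⁻ t in Ioc 0 (c * N), H (superlevel v t) from
    h.trans (lintegral_mono_set Ioc_subset_Ioi_self)
  induction N with
  | zero => simp
  | succ N ih =>
    have hstep : ENNReal.ofReal c * H (superlevel v (c * (N + 1))) ≤
        ∫⁻ t in Ioc (c * N) (c * (N + 1)), H (superlevel v t) :=
      calc ENNReal.ofReal c * H (superlevel v (c * (N + 1)))
          = ∫⁻ _ in Ioc (c * N) (c * (N + 1)), H (superlevel v (c * (N + 1))) := by
            rw [setLIntegral_const, Real.volume_Ioc, mul_comm]; ring_nf
        _ ≤ ∫⁻ t in Ioc (c * N) (c * (N + 1)), H (superlevel v t) :=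
            setLIntegral_mono (hmono.measurable_comp_superlevel v)
              fun t ht => hmono (superlevel_antitone v ht.2)
    rw [Finset.sum_range_succ, Nat.cast_succ,
      ← Ioc_union_Ioc_eq_Ioc (b := c * N) (by positivity) (by nlinarith),
      lintegral_union measurableSet_Ioc (Ioc_disjoint_Ioc_of_le le_rfl)]
    exact add_le_add ih hstep

noncomputable def stairs (v : α → ℝ≥0∞) (c : ℝ) (N : ℕ) : α → ℝ≥0∞ :=
  ∑ i ∈ Finset.range N, (superlevel v (c * (i + 1))).indicator fun _ => ENNReal.ofReal c

theorem choquet_add_stairs_le (hmono : MonotoneSF H) (hssa : StronglySubadditive H)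
    (u v : α → ℝ≥0∞) {c : ℝ} (hc : 0 ≤ c) (N : ℕ) :
    choquet H (u + stairs v c N) ≤ choquet H u + choquet H v :=
  (choquet_add_sum_indicator_le hmono hssa u _ hc N).trans
    (add_le_add_right (sum_ofReal_mul_superlevel_le_choquet hmono v hc N) _)

theorem stairs_apply_of_ofReal_lt (v : α → ℝ≥0∞) {c : ℝ} (hc : 0 ≤ c) {N : ℕ} {x : α}
    (hx : ENNReal.ofReal (c * N) < v x) : stairs v c N x = ENNReal.ofReal (c * N) := by
  have hfire : ∀ i ∈ Finset.range N, x ∈ superlevel v (c * (i + 1)) := fun i hi =>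
    superlevel_antitone v
      (mul_le_mul_of_nonneg_left (by exact_mod_cast Finset.mem_range.1 hi) hc) hx
  rw [stairs, Finset.sum_apply, Finset.sum_congr rfl fun i hi => indicator_of_mem (hfire i hi) _,
    Finset.sum_const, Finset.card_range, nsmul_eq_mul, mul_comm, ENNReal.ofReal_mul hc,
    ENNReal.ofReal_natCast]

theorem min_le_stairs_add (v : α → ℝ≥0∞) {c : ℝ} (hc : 0 ≤ c) (N : ℕ) (x : α) :
    min (v x) (ENNReal.ofReal (c * N)) ≤ stairs v c N x + ENNReal.ofReal c := by
  induction N with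
  | zero => simp
  | succ N ih =>
    have hmono : stairs v c N x ≤ stairs v c (N + 1) x := by
      simp only [stairs, Finset.sum_apply, Finset.sum_range_succ]
      exact le_self_add
    have hsucc : ENNReal.ofReal (c * (N + 1 : ℕ)) =
        ENNReal.ofReal (c * N) + ENNReal.ofReal c := by
      rw [← ENNReal.ofReal_add (by positivity) hc]; push_cast; ring_nf
    rcases lt_or_ge (ENNReal.ofReal (c * (N + 1 : ℕ))) (v x) with h | h
    · rw [stairs_apply_of_ofReal_lt v hc h]
      exact (min_le_right _ _).trans le_self_add
    rcases le_or_gt (v x) (ENNReal.ofReal (c * N)) with h' | h'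
    · calc min (v x) _ ≤ v x := min_le_left _ _
        _ = min (v x) (ENNReal.ofReal (c * N)) := (min_eq_left h').symm
        _ ≤ stairs v c (N + 1) x + ENNReal.ofReal c := ih.trans (add_le_add_left hmono _)
    · calc min (v x) _ ≤ ENNReal.ofReal (c * (N + 1 : ℕ)) := min_le_right _ _
        _ = stairs v c N x + ENNReal.ofReal c := by
            rw [hsucc, stairs_apply_of_ofReal_lt v hc h']
        _ ≤ stairs v c (N + 1) x + ENNReal.ofReal c := add_le_add_left hmono _

theorem superlevel_add_subset_add_stairs (u v : α → ℝ≥0∞) {c t : ℝ} {N : ℕ} (hc : 0 ≤ c)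
    (hct : c ≤ t) (htN : t < c * N) :
    superlevel (u + v) t ⊆ superlevel (u + stairs v c N) (t - c) := by
  intro x hx
  have hcap : ENNReal.ofReal t < u x + min (v x) (ENNReal.ofReal (c * N)) := by
    rcases le_total (v x) (ENNReal.ofReal (c * N)) with h | h
    · rwa [min_eq_left h]
    · rw [min_eq_right h]
      exact ((ENNReal.ofReal_lt_ofReal_iff (hc.trans_lt (hct.trans_lt htN))).2 htN).trans_le
        le_add_self
  have : ENNReal.ofReal (t - c) + ENNReal.ofReal c <
      (u x + stairs v c N x) + ENNReal.ofReal c := by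
    rw [← ENNReal.ofReal_add (sub_nonneg.2 hct) hc, sub_add_cancel, add_assoc]
    exact hcap.trans_le (add_le_add_right (min_le_stairs_add v hc N x) _)
  exact (ENNReal.add_lt_add_iff_right ENNReal.ofReal_ne_top).1 this

theorem setLIntegral_liminf_superlevel_div_le (hmono : MonotoneSF H) {P : ℕ → α → ℝ≥0∞}
    {C : ℝ≥0∞} (hP : ∀ k, choquet H (P k) ≤ C) {r : ℝ} (hr : 0 < r) :
    ∫⁻ t in Ioi 0, liminf (fun k => H (superlevel (P k) (t / r))) atTop ≤
      ENNReal.ofReal r * C :=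
  calc ∫⁻ t in Ioi 0, liminf (fun k => H (superlevel (P k) (t / r))) atTop
      ≤ liminf (fun k => ∫⁻ t in Ioi 0, H (superlevel (P k) (t / r))) atTop :=
        lintegral_liminf_le fun k =>
          (hmono.measurable_comp_superlevel (P k)).comp (measurable_div_const r)
    _ = liminf (fun k => ENNReal.ofReal r * choquet H (P k)) atTop :=
        congrArg (liminf · atTop) <| funext fun k =>
          setLIntegral_Ioi_zero_comp_div (fun s => H (superlevel (P k) s)) hr
    _ ≤ ENNReal.ofReal r * C :=
        liminf_le_of_frequently_le' (Frequently.of_forall fun k => by gcongr; exact hP k)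

theorem choquet_add_le (hmono : MonotoneSF H) (hssa : StronglySubadditive H)
    (u v : α → ℝ≥0∞) :
    choquet H (u + v) ≤ choquet H u + choquet H v := by
  refine ENNReal.le_of_forall_one_lt_le_ofReal_mul fun r hr => ?_
  -- steps of size `1 / (k + 1)` up to height `k + 1`
  set P : ℕ → α → ℝ≥0∞ := fun k => u + stairs v ((k : ℝ) + 1)⁻¹ ((k + 1) ^ 2)
  have hP : ∀ k, choquet H (P k) ≤ choquet H u + choquet H v := fun k =>
    choquet_add_stairs_le hmono hssa u v (by positivity) _
  have hsub : ∀ t : ℝ, 0 < t → ∀ᶠ k in atTop,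
      superlevel (u + v) t ⊆ superlevel (P k) (t / r) := by
    intro t ht
    have hgap : 0 < t - t / r := sub_pos.2 (div_lt_self ht hr)
    obtain ⟨K, hK⟩ := exists_nat_gt (max t (t - t / r)⁻¹)
    filter_upwards [eventually_ge_atTop K] with k hk
    have hkK : max t (t - t / r)⁻¹ < k + 1 :=
      hK.trans_le (by exact_mod_cast hk.trans (Nat.le_succ k))
    have hstep : ((k : ℝ) + 1)⁻¹ < t - t / r :=
      (inv_lt_comm₀ (by positivity : (0 : ℝ) < k + 1) hgap).2 ((le_max_right _ _).trans_lt hkK)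
    have hheight : t < ((k : ℝ) + 1)⁻¹ * ((k + 1) ^ 2 : ℕ) := by
      have : ((k : ℝ) + 1)⁻¹ * ((k + 1) ^ 2 : ℕ) = k + 1 := by push_cast; field_simp
      rw [this]; exact (le_max_left _ _).trans_lt hkK
    have hpos : 0 < t / r := div_pos ht (zero_lt_one.trans hr)
    exact (superlevel_add_subset_add_stairs u v (by positivity) (by linarith) hheight).trans
      (superlevel_antitone _ (by linarith))
  calc choquet H (u + v)
      ≤ ∫⁻ t in Ioi 0, liminf (fun k => H (superlevel (P k) (t / r))) atTop :=
        setLIntegral_mono' measurableSet_Ioi fun t ht =>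
          le_liminf_of_le (by isBoundedDefault) ((hsub t ht).mono fun k hk => hmono hk)
    _ ≤ ENNReal.ofReal r * (choquet H u + choquet H v) :=
        setLIntegral_liminf_superlevel_div_le hmono hP (zero_lt_one.trans hr)

/-- Nonemptiness matters: `choquet H 0 = ∞ * H ∅`, and `H ∅` need not vanish. -/
theorem choquet_sum_le (hmono : MonotoneSF H) (hssa : StronglySubadditive H) {ι : Type*}
    (g : ι → α → ℝ≥0∞) {s : Finset ι} (hs : s.Nonempty) :
    choquet H (∑ i ∈ s, g i) ≤ ∑ i ∈ s, choquet H (g i) := by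
  induction hs using Finset.Nonempty.cons_induction with
  | singleton i => simp
  | cons i s hi _ ih =>
    rw [Finset.sum_cons, Finset.sum_cons]
    exact (choquet_add_le hmono hssa _ _).trans (add_le_add_right ih _)

theorem choquet_le_of_forall_eventually_superlevel_subset (hmono : MonotoneSF H)
    (hssa : StronglySubadditive H) {G : α → ℝ≥0∞} {P : ℕ → α → ℝ≥0∞} {C : ℝ≥0∞}
    (hP : ∀ k, choquet H (P k) ≤ C)
    (hG : ∀ r : ℝ, 1 < r → ∀ δ : ℝ, 0 < δ → ∃ E, H E ≤ ENNReal.ofReal δ ∧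
      ∀ t : ℝ, 0 < t → ∀ᶠ k in atTop, superlevel G t ⊆ E ∪ superlevel (P k) (t / r)) :
    choquet H G ≤ C := by
  refine ENNReal.le_of_forall_one_lt_le_ofReal_mul fun r hr => ?_
  rw [choquet_eq_setLIntegral_superlevel, setLIntegral_Ioi_eq_iSup_Ioc]
  refine iSup_le fun n => ENNReal.le_of_forall_pos_le_add fun ε hε _ => ?_
  obtain ⟨E, hE, hGE⟩ := hG r hr (ε / (n + 1)) (by positivity)
  set L : ℝ → ℝ≥0∞ := fun t => liminf (fun k => H (superlevel (P k) (t / r))) atTop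
  have hL : ∀ t : ℝ, 0 < t → H (superlevel G t) ≤ H E + L t := fun t ht =>
    tsub_le_iff_left.1 <| le_liminf_of_le (by isBoundedDefault) <| (hGE t ht).mono fun k hk =>
      tsub_le_iff_left.2 ((hmono hk).trans (hssa.union_le _ _))
  have hEn : H E * ENNReal.ofReal n ≤ ε := by
    calc H E * ENNReal.ofReal n ≤ ENNReal.ofReal (ε / (n + 1)) * ENNReal.ofReal n := by gcongr
      _ = ENNReal.ofReal (ε / (n + 1) * n) := (ENNReal.ofReal_mul (by positivity)).symm
      _ ≤ ENNReal.ofReal ε := ENNReal.ofReal_le_ofReal <| by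
          rw [div_mul_eq_mul_div, div_le_iff₀ (by positivity)]; nlinarith [ε.2]
      _ = ε := ENNReal.ofReal_coe_nnreal
  calc ∫⁻ t in Ioc 0 (n : ℝ), H (superlevel G t) ≤ ∫⁻ t in Ioc 0 (n : ℝ), (H E + L t) :=
        setLIntegral_mono' measurableSet_Ioc fun t ht => hL t ht.1
    _ = H E * ENNReal.ofReal n + ∫⁻ t in Ioc 0 (n : ℝ), L t := by
        rw [lintegral_add_left measurable_const, setLIntegral_const, Real.volume_Ioc, sub_zero]
    _ ≤ ε + ENNReal.ofReal r * C :=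
        add_le_add hEn ((lintegral_mono_set Ioc_subset_Ioi_self).trans
          (setLIntegral_liminf_superlevel_div_le hmono hP (zero_lt_one.trans hr)))
    _ = ENNReal.ofReal r * C + ε := add_comm _ _

theorem superlevel_ofReal_abs_subset_union {F S : α → ℝ} {E : Set α} {s t : ℝ} (hs : 0 ≤ s)
    (hFS : ∀ x ∉ E, dist (F x) (S x) < t - s) :
    superlevel (fun x => ENNReal.ofReal |F x|) t ⊆
      E ∪ superlevel (fun x => ENNReal.ofReal |S x|) s := by
  intro x hx
  refine or_iff_not_imp_left.2 fun hxE => ?_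
  have htF : t < |F x| := ((ENNReal.ofReal_lt_ofReal_iff').1 hx).1
  have hFS' : |F x| - |S x| < t - s :=
    (abs_sub_abs_le_abs_sub _ _).trans_lt (Real.dist_eq _ _ ▸ hFS x hxE)
  exact (ENNReal.ofReal_lt_ofReal_iff_of_nonneg hs).2 (by linarith)

end Choquet

/-- Countable sublinearity of the Choquet integral for series whose
partial sums converge quasi-uniformly. -/
theorem choquet_countably_sublinear_of_quasiUniform {d : ℕ}
    (H : Set (EuclideanSpace ℝ (Fin d)) → ℝ≥0∞)
    (hmono : MonotoneSF H) (hssa : StronglySubadditive H)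
    (f : ℕ → EuclideanSpace ℝ (Fin d) → ℝ) (F : EuclideanSpace ℝ (Fin d) → ℝ)
    (hqu : QUTendsto H (fun k x => ∑ n ∈ Finset.range (k + 1), f n x) F) :
    choquet H (fun x => ENNReal.ofReal |F x|) ≤
      ∑' n, choquet H (fun x => ENNReal.ofReal |f n x|) := by
  set g : ℕ → EuclideanSpace ℝ (Fin d) → ℝ≥0∞ := fun n x => ENNReal.ofReal |f n x|
  have hpartial : ∀ k x, ENNReal.ofReal |∑ n ∈ Finset.range (k + 1), f n x| ≤
      (∑ n ∈ Finset.range (k + 1), g n) x := fun k x => by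
    rw [Finset.sum_apply, ← ENNReal.ofReal_sum_of_nonneg fun n _ => abs_nonneg _]
    exact ENNReal.ofReal_le_ofReal (Finset.abs_sum_le_sum_abs _ _)
  refine choquet_le_of_forall_eventually_superlevel_subset hmono hssa
    (P := fun k => ∑ n ∈ Finset.range (k + 1), g n) (fun k => ?_) fun r hr δ hδ => ?_
  · exact (choquet_sum_le hmono hssa g Finset.nonempty_range_add_one).trans
      (ENNReal.sum_le_tsum _)
  obtain ⟨E, hE, hunif⟩ := hqu δ hδ
  refine ⟨E, hE, fun t ht => ?_⟩
  have hgap : 0 < t - t / r := sub_pos.2 (div_lt_self ht hr)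
  filter_upwards [Metric.tendstoUniformlyOn_iff.1 hunif _ hgap] with k hk
  exact (superlevel_ofReal_abs_subset_union (by positivity) hk).trans
    (union_subset_union_right E (superlevel_mono (hpartial k) _))
end
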